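/- Suppose the only observed action is that consumer i purchased product h from market M (satisfying Independence and Invariance, no ties in values). Then the partial-ranking characterization of optimality implies that the purchased product has the highest effective value: w_h > w_k for all k ∈ M \ {h}, where w_j = min(z_j, u_j) is the effective value. Conversely, if w_h > w_k for all k ≠ h, there exists an optimal search process (under the Gittins index policy) ending in the purchase of h. -/

import Mathlib

/-- An action in the baseline sequential search model over `n` products:
inspect a product or purchase an (already inspected) product. -/
inductive SearchAction (n : ℕ) where
  | inspect (j : Fin n)
  | purchase (j : Fin n)
deriving DecidableEq

namespace SearchAction

/-- The Gittins index of an action: the reservation value for an inspection,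
the purchase value for a purchase. -/
def val {n : ℕ} (z u : Fin n → ℝ) : SearchAction n → ℝ
  | inspect j => z j
  | purchase j => u j

/-- Availability of an action given the list `prev` of previously selected
actions: an inspection is available iff not yet taken; a purchase is available
iff the product has been inspected and not yet purchased. -/
def available {n : ℕ} (prev : List (SearchAction n)) : SearchAction n → Prop
  | inspect j => inspect j ∉ prev
  | purchase j => inspect j ∈ prev ∧ purchase j ∉ prev

/-- A realized search process ending in the purchase of `h`: every selected
action is available when selected, every action selected at each step has the
highest Gittins index among available actions (the Gittins index policy), all
steps but the last are inspections, and the last step purchases `h`. -/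
def IsOptimalSearchEndingIn {n : ℕ} (z u : Fin n → ℝ) (h : Fin n)
    (seq : List (SearchAction n)) : Prop :=
  seq ≠ [] ∧
  (∀ t : Fin seq.length, available (seq.take t) (seq.get t)) ∧
  (∀ t : Fin seq.length, ∀ a, available (seq.take t) a →
      val z u a ≤ val z u (seq.get t)) ∧
  (∀ t : Fin seq.length, (t : ℕ) < seq.length - 1 →
      ∃ j, seq.get t = inspect j) ∧
  seq.getLast? = some (purchase h)

end SearchAction

/-! While only inspections have been made, every product `k` offers an available action
(purchase `k` if `k` was inspected, inspect `k` otherwise) whose index is at least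
`min (z k) (u k)`. The Gittins index policy compares it with the step inspecting `h` and with the
final purchase of `h`, so with distinct indices `min (z k) (u k) < min (z h) (u h)`.
Conversely, inspect the products with `z k ≥ min (z h) (u h)` in decreasing order of `z` and then
buy `h`: the only earlier purchase that could outbid an inspection of `j` is that of `h`, and
`z j < z h` forces `u h = min (z h) (u h) ≤ z j`. -/

theorem List.forall_take_get_iff_forall_prefix {α : Type*} {l : List α}
    {P : List α → α → Prop} :
    (∀ t : Fin l.length, P (l.take t) (l.get t)) ↔ ∀ p a, p ++ [a] <+: l → P p a := by
  constructor
  · rintro hP p a ⟨s, rfl⟩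
    simpa using hP ⟨p.length, by simp⟩
  · intro hP t
    apply hP
    rw [List.get_eq_getElem, ← List.concat_eq_append, List.take_concat_get]
    exact List.take_prefix _ _

theorem Finset.exists_list_pairwise_gt {α β : Type*} [LinearOrder β] (f : α → β)
    (s : Finset α) (hf : Set.InjOn f s) :
    ∃ l : List α, l.Pairwise (fun a b => f b < f a) ∧ ∀ x, x ∈ l ↔ x ∈ s := by
  refine ⟨s.toList.mergeSort (fun a b => decide (f b ≤ f a)), ?_, by simp⟩
  have hsorted := List.pairwise_mergeSort (l := s.toList) (le := fun a b => decide (f b ≤ f a))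
    (fun a b c hab hbc => by simp only [decide_eq_true_eq] at *; exact hbc.trans hab)
    (fun a b => by simpa using le_total (f b) (f a))
  have hnodup : (s.toList.mergeSort (fun a b => decide (f b ≤ f a))).Nodup :=
    List.nodup_mergeSort.mpr s.nodup_toList
  refine (hsorted.and hnodup).imp_of_mem fun ha hb ⟨hle, hne⟩ => ?_
  simp only [decide_eq_true_eq] at hle
  exact hle.lt_of_ne fun heq => hne (hf (by simpa using hb) (by simpa using ha) heq).symm

namespace SearchAction

variable {n : ℕ} (z u : Fin n → ℝ)

def IsGreedyStep (prev : List (SearchAction n)) (a : SearchAction n) : Prop :=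
  available prev a ∧ ∀ b, available prev b → val z u b ≤ val z u a

def IsGreedy (seq : List (SearchAction n)) : Prop :=
  ∀ prev a, prev ++ [a] <+: seq → IsGreedyStep z u prev a

variable {z u}

theorem inspect_injective : Function.Injective (inspect : Fin n → SearchAction n) :=
  fun _ _ h => inspect.inj h

@[simp]
theorem available_inspect_map_inspect {l : List (Fin n)} {k : Fin n} :
    available (l.map inspect) (inspect k) ↔ k ∉ l := by
  simp [available, List.mem_map_of_injective inspect_injective]

@[simp]
theorem available_purchase_map_inspect {l : List (Fin n)} {k : Fin n} :
    available (l.map inspect) (purchase k) ↔ k ∈ l := by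
  simp [available, List.mem_map_of_injective inspect_injective]

theorem isGreedy_nil : IsGreedy z u [] := by
  intro prev a hpre
  simpa using hpre.length_le

theorem isGreedy_append_singleton {seq : List (SearchAction n)} {a : SearchAction n} :
    IsGreedy z u (seq ++ [a]) ↔ IsGreedy z u seq ∧ IsGreedyStep z u seq a := by
  simp only [IsGreedy, List.prefix_concat_iff, List.append_singleton_inj, or_imp, forall_and]
  constructor
  · rintro ⟨hlast, hprefix⟩
    exact ⟨hprefix, hlast _ _ ⟨rfl, rfl⟩⟩
  · rintro ⟨hprefix, hlast⟩
    exact ⟨by rintro _ _ ⟨rfl, rfl⟩; exact hlast, hprefix⟩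

theorem isOptimalSearchEndingIn_iff {h : Fin n} {seq : List (SearchAction n)} :
    IsOptimalSearchEndingIn z u h seq ↔
      ∃ l : List (Fin n), seq = l.map inspect ++ [purchase h] ∧ IsGreedy z u seq := by
  simp only [IsGreedy, IsGreedyStep, ← List.forall_take_get_iff_forall_prefix, forall_and]
  constructor
  · rintro ⟨-, havailable, hmax, hinspect, hlast⟩
    obtain ⟨p, rfl⟩ := List.getLast?_eq_some_iff.mp hlast
    have hp : p ∈ Set.range (List.map inspect) := by
      rw [Set.range_list_map]
      intro a ha
      obtain ⟨i, hi, rfl⟩ := List.getElem_of_mem ha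
      obtain ⟨j, hj⟩ := hinspect ⟨i, by simp; omega⟩ (by simpa using hi)
      exact ⟨j, by simpa [List.getElem_append_left hi] using hj.symm⟩
    obtain ⟨l, rfl⟩ := hp
    exact ⟨l, rfl, havailable, hmax⟩
  · rintro ⟨l, rfl, havailable, hmax⟩
    refine ⟨by simp, havailable, hmax, fun t ht => ⟨l[t.1]'(by simpa using ht), ?_⟩, by simp⟩
    simp [List.getElem_append_left (by simpa using ht : t.1 < (l.map inspect).length)]

theorem min_lt_val_of_isGreedyStep (hval : Function.Injective (val z u)) {l : List (Fin n)}
    {a : SearchAction n} (hstep : IsGreedyStep z u (l.map inspect) a) {k : Fin n}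
    (hinspect : a ≠ inspect k) (hpurchase : a ≠ purchase k) :
    min (z k) (u k) < val z u a := by
  obtain ⟨-, hmax⟩ := hstep
  by_cases hk : k ∈ l
  · have hle := hmax (purchase k) (available_purchase_map_inspect.mpr hk)
    exact (min_le_right _ _).trans_lt (hle.lt_of_ne fun heq => hpurchase (hval heq).symm)
  · have hle := hmax (inspect k) (available_inspect_map_inspect.mpr hk)
    exact (min_le_left _ _).trans_lt (hle.lt_of_ne fun heq => hinspect (hval heq).symm)

theorem isGreedy_map_inspect {l : List (Fin n)}
    (hl : l.Pairwise fun i j => z j < z i ∧ u i ≤ z j) (hout : ∀ j ∈ l, ∀ k ∉ l, z k ≤ z j) :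
    IsGreedy z u (l.map inspect) := by
  induction l using List.reverseRecOn with
  | nil => exact isGreedy_nil
  | append_singleton l j ih =>
    obtain ⟨hl, -, hlj⟩ := List.pairwise_append.mp hl
    simp only [List.mem_singleton, forall_eq] at hlj
    rw [List.map_append, List.map_singleton, isGreedy_append_singleton]
    refine ⟨ih hl fun i hi k hk => ?_,
      available_inspect_map_inspect.mpr fun hj => (hlj j hj).1.false, ?_⟩
    · by_cases hkj : k = j
      · exact hkj ▸ (hlj i hi).1.le
      · exact hout i (by simp [hi]) k (by simp [hk, hkj])
    · rintro (k | k) hk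
      · by_cases hkj : k = j
        · exact hkj ▸ le_rfl
        · exact hout j (by simp) k (by simp [available_inspect_map_inspect.mp hk, hkj])
      · exact (hlj k (available_purchase_map_inspect.mp hk)).2

theorem min_lt_min_of_isOptimalSearchEndingIn (hval : Function.Injective (val z u))
    {h k : Fin n} {seq : List (SearchAction n)} (hopt : IsOptimalSearchEndingIn z u h seq)
    (hk : k ≠ h) : min (z k) (u k) < min (z h) (u h) := by
  obtain ⟨l, rfl, hgreedy⟩ := isOptimalSearchEndingIn_iff.mp hopt
  have hpurchase := (isGreedy_append_singleton.mp hgreedy).2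
  obtain ⟨l₁, l₂, rfl⟩ := List.append_of_mem (available_purchase_map_inspect.mp hpurchase.1)
  have hinspect : IsGreedyStep z u (l₁.map inspect) (inspect h) :=
    hgreedy _ _ ⟨l₂.map inspect ++ [purchase h], by simp⟩
  exact lt_min (min_lt_val_of_isGreedyStep hval hinspect (by simpa using hk.symm) (by simp))
    (min_lt_val_of_isGreedyStep hval hpurchase (by simp) (by simpa using hk.symm))

theorem exists_isOptimalSearchEndingIn (hz : Function.Injective z) {h : Fin n}
    (hbest : ∀ k, k ≠ h → min (z k) (u k) < min (z h) (u h)) :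
    ∃ seq, IsOptimalSearchEndingIn z u h seq := by
  set w := min (z h) (u h)
  obtain ⟨l, hsorted, hmem⟩ := Finset.exists_list_pairwise_gt z {k | w ≤ z k} hz.injOn
  simp only [Finset.mem_filter, Finset.mem_univ, true_and] at hmem
  have hu : ∀ k ∈ l, k ≠ h → u k < w := fun k hk hkh =>
    (min_lt_iff.mp (hbest k hkh)).resolve_left ((hmem k).mp hk).not_gt
  have hh : h ∈ l := (hmem h).mpr (min_le_left _ _)
  refine ⟨_, isOptimalSearchEndingIn_iff.mpr ⟨l, rfl, isGreedy_append_singleton.mpr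
    ⟨isGreedy_map_inspect (hsorted.imp_of_mem fun {i j} hi hj hji => ⟨hji, ?_⟩) ?_, ?_⟩⟩⟩
  · by_cases hih : i = h
    · subst hih
      exact (min_le_iff.mp ((hmem j).mp hj)).resolve_left hji.not_ge
    · exact (hu i hi hih).le.trans ((hmem j).mp hj)
  · intro j hj k hk
    exact (not_le.mp (mt (hmem k).mpr hk)).le.trans ((hmem j).mp hj)
  · refine ⟨available_purchase_map_inspect.mpr hh, ?_⟩
    rintro (k | k) hk
    · exact (not_le.mp (mt (hmem k).mpr (available_inspect_map_inspect.mp hk))).le.trans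
        (min_le_right _ _)
    · by_cases hkh : k = h
      · exact hkh ▸ le_rfl
      · exact (hu k (available_purchase_map_inspect.mp hk) hkh).le.trans (min_le_right _ _)

end SearchAction

open SearchAction in
/-- **Eventual Purchase Theorem** as a corollary of the partial ranking
representation: with pairwise distinct values, an optimal search process ends
with the purchase of `h` only if `h` has the highest effective value
`w j = min (z j) (u j)`; conversely, if `w h > w k` for all `k ≠ h`, some
optimal search process ends with the purchase of `h`. -/
theorem eventual_purchase_theorem
    {n : ℕ} (z u : Fin n → ℝ) (h : Fin n)
    (hdistinct : Function.Injective (val z u)) :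
    ((∀ seq : List (SearchAction n), IsOptimalSearchEndingIn z u h seq →
        ∀ k : Fin n, k ≠ h → min (z h) (u h) > min (z k) (u k)) ∧
     ((∀ k : Fin n, k ≠ h → min (z h) (u h) > min (z k) (u k)) →
        ∃ seq : List (SearchAction n), IsOptimalSearchEndingIn z u h seq)) :=
  ⟨fun _ hopt _ hk => min_lt_min_of_isOptimalSearchEndingIn hdistinct hopt hk,
    exists_isOptimalSearchEndingIn (hdistinct.comp inspect_injective)⟩
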